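/- arXiv:1911.07595 — 5 statements merged into one kernel-verified Lean document; each statement's English description precedes it below -/
import Mathlib

section
/- Let P be a positive definite real n×n matrix, A a real n×n matrix with PA + A'P negative semidefinite, C a real p×n matrix, and α > 0. Then for every solution ε of the linear ODE ε̇ = (A - αP⁻¹C'C)ε, the function t ↦ ε(t)'Pε(t) is nonincreasing; more precisely its derivative satisfies d/dt (ε'Pε) ≤ -2α|Cε|². -/
open Matrix

/-! The gain `α P⁻¹ C'C` is chosen so that the `P⁻¹` cancels in `PM + M'P`, where
`M = A - α P⁻¹ C'C`: along solutions, `d/dt (ε'Pε) = ε'(PA + A'P)ε - 2α|Cε|²`, and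
dissipativity bounds the first term by `0`. -/

section Derivatives

variable {𝕜 : Type*} [NontriviallyNormedField 𝕜] {m n : Type*} [Fintype n]
  {f g : 𝕜 → n → 𝕜} {f' g' : n → 𝕜} {t : 𝕜}

theorem HasDerivAt.dotProduct (hf : HasDerivAt f f' t) (hg : HasDerivAt g g' t) :
    HasDerivAt (fun s => f s ⬝ᵥ g s) (f' ⬝ᵥ g t + f t ⬝ᵥ g') t := by
  have hfi := hasDerivAt_pi.mp hf
  have hgi := hasDerivAt_pi.mp hg
  have h := HasDerivAt.fun_sum (u := Finset.univ) fun i _ => (hfi i).fun_mul (hgi i)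
  rw [Finset.sum_add_distrib] at h
  exact h

theorem HasDerivAt.mulVec (M : Matrix m n 𝕜) (hf : HasDerivAt f f' t) :
    HasDerivAt (fun s => M *ᵥ f s) (M *ᵥ f') t :=
  hasDerivAt_pi.mpr fun i => by
    have h := (hasDerivAt_const t (M i)).dotProduct hf
    rw [zero_dotProduct, zero_add] at h
    exact h

theorem HasDerivAt.dotProduct_mulVec_self (P : Matrix n n 𝕜) (hf : HasDerivAt f f' t) :
    HasDerivAt (fun s => f s ⬝ᵥ P *ᵥ f s) (f' ⬝ᵥ P *ᵥ f t + f t ⬝ᵥ P *ᵥ f') t :=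
  hf.dotProduct (hf.mulVec P)

end Derivatives

section Algebra

variable {R : Type*} [CommRing R] {m n : Type*} [Fintype m] [Fintype n]

theorem Matrix.mulVec_dotProduct_mulVec_add_dotProduct_mulVec_mulVec (P M : Matrix n n R)
    (x : n → R) :
    (M *ᵥ x) ⬝ᵥ P *ᵥ x + x ⬝ᵥ P *ᵥ (M *ᵥ x) = x ⬝ᵥ (P * M + Mᵀ * P) *ᵥ x := by
  rw [dotProduct_comm, ← dotProduct_transpose_mulVec, mulVec_mulVec, mulVec_mulVec,
    add_mulVec, dotProduct_add, add_comm]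

theorem Matrix.dotProduct_transpose_mul_self_mulVec (C : Matrix m n R) (x : n → R) :
    x ⬝ᵥ (Cᵀ * C) *ᵥ x = (C *ᵥ x) ⬝ᵥ (C *ᵥ x) := by
  rw [← mulVec_mulVec, dotProduct_transpose_mulVec]

theorem Matrix.mul_sub_smul_inv_mul_add_transpose_mul [DecidableEq n] {P B : Matrix n n R}
    (hP : Pᵀ = P) (hB : Bᵀ = B) (hdet : IsUnit P.det) (A : Matrix n n R) (α : R) :
    P * (A - α • (P⁻¹ * B)) + (A - α • (P⁻¹ * B))ᵀ * P = P * A + Aᵀ * P - (2 * α) • B := by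
  have hPB : P * (P⁻¹ * B) = B := mul_nonsing_inv_cancel_left P B hdet
  have hBP : (P⁻¹ * B)ᵀ * P = B := by
    rw [transpose_mul, hB, transpose_nonsing_inv, hP, Matrix.mul_assoc,
      nonsing_inv_mul _ hdet, Matrix.mul_one]
  rw [Matrix.mul_sub, transpose_sub, transpose_smul, Matrix.sub_mul, Matrix.mul_smul,
    Matrix.smul_mul, hPB, hBP, two_mul, add_smul]
  abel

end Algebra

/-- dissipativity implies the Lyapunov function V(ε)=ε'Pε is
nonincreasing along solutions of ε̇ = (A - αP⁻¹C'C)ε, with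
d/dt (ε'Pε) ≤ -2α|Cε|². -/
theorem stmt0 {n p : ℕ}
    (P A : Matrix (Fin n) (Fin n) ℝ) (C : Matrix (Fin p) (Fin n) ℝ)
    (hP : P.PosDef)
    (hdiss : ∀ x : Fin n → ℝ, x ⬝ᵥ (P * A + Aᵀ * P) *ᵥ x ≤ 0)
    (α : ℝ) (hα : 0 < α)
    (ε : ℝ → Fin n → ℝ)
    (hε : ∀ t, HasDerivAt ε ((A - α • (P⁻¹ * Cᵀ * C)) *ᵥ ε t) t) :
    (∀ t, deriv (fun s => ε s ⬝ᵥ P *ᵥ ε s) t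
        ≤ -2 * α * ((C *ᵥ ε t) ⬝ᵥ (C *ᵥ ε t))) ∧
    Antitone (fun t => ε t ⬝ᵥ P *ᵥ ε t) := by
  have hPsymm : Pᵀ = P := (isHermitian_iff_isSymm.mp hP.1).eq
  have hCC : (Cᵀ * C)ᵀ = Cᵀ * C := by rw [transpose_mul, transpose_transpose]
  have hdet : IsUnit P.det := isUnit_iff_ne_zero.mpr hP.det_pos.ne'
  have hV : ∀ t, HasDerivAt (fun s => ε s ⬝ᵥ P *ᵥ ε s)
      (ε t ⬝ᵥ (P * A + Aᵀ * P) *ᵥ ε t - 2 * α * ((C *ᵥ ε t) ⬝ᵥ (C *ᵥ ε t))) t := by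
    intro t
    have h := (hε t).dotProduct_mulVec_self P
    rwa [mulVec_dotProduct_mulVec_add_dotProduct_mulVec_mulVec, Matrix.mul_assoc P⁻¹,
      mul_sub_smul_inv_mul_add_transpose_mul hPsymm hCC hdet, sub_mulVec, dotProduct_sub,
      smul_mulVec, dotProduct_smul, dotProduct_transpose_mul_self_mulVec, smul_eq_mul] at h
  have hderiv_le : ∀ t, deriv (fun s => ε s ⬝ᵥ P *ᵥ ε s) t
      ≤ -2 * α * ((C *ᵥ ε t) ⬝ᵥ (C *ᵥ ε t)) := fun t => by
    rw [(hV t).deriv]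
    linarith [hdiss (ε t)]
  refine ⟨hderiv_le, antitone_of_deriv_nonpos (fun t => (hV t).differentiableAt) fun t => ?_⟩
  have hCε : 0 ≤ (C *ᵥ ε t) ⬝ᵥ (C *ᵥ ε t) := by
    simpa using dotProduct_self_star_nonneg (C *ᵥ ε t)
  linarith [hderiv_le t, mul_nonneg hα.le hCε]
end

section
/- Let P be positive definite with PA + A'P ≤ 0, C a p×n matrix such that the pair (C, A) is detectable (i.e., every solution ω of ω̇ = Aω with Cω ≡ 0 converges to 0), and α > 0. Then the matrix A - αP⁻¹C'C is Hurwitz: all its eigenvalues have negative real part. -/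
/-!
Let `z ≠ 0` be a complex eigenvector of `M = A - α P⁻¹ Cᵀ C` with eigenvalue `μ`. Since
`P M + Mᵀ P = P A + Aᵀ P - 2α Cᵀ C`, the Hermitian forms give
`2 Re μ ⟪z, P z⟫ = ⟪z, (P A + Aᵀ P) z⟫ - 2α ‖C z‖² ≤ -2α ‖C z‖²`, so `Re μ ≥ 0` would force
`C z = 0` and hence `A z = μ z`. The real and imaginary parts of `e^{μt} z` would then be
solutions of `ω̇ = A ω` with zero output, hence tend to `0` by detectability, although
`‖e^{μt} z‖ = e^{t Re μ} ‖z‖ ≥ ‖z‖ > 0`.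
-/

open Matrix Filter Topology

theorem eq_zero_of_tendsto_cexp_mul_smul {E : Type*} [NormedAddCommGroup E] [NormedSpace ℂ E]
    {μ : ℂ} (hμ : 0 ≤ μ.re) {z : E}
    (h : Tendsto (fun t : ℝ => Complex.exp (μ * t) • z) atTop (𝓝 0)) : z = 0 := by
  have hle : ∀ᶠ t : ℝ in atTop, ‖z‖ ≤ ‖Complex.exp (μ * t) • z‖ := by
    filter_upwards [eventually_ge_atTop 0] with t ht
    rw [norm_smul, Complex.norm_exp, Complex.re_mul_ofReal]
    exact le_mul_of_one_le_left (norm_nonneg z) (Real.one_le_exp (mul_nonneg hμ ht))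
  exact norm_le_zero_iff.1 (ge_of_tendsto (by simpa using h.norm) hle)

namespace Matrix

open Complex

variable {ι : Type*} [Fintype ι]

theorem exists_mulVec_eq_smul_of_mem_spectrum [DecidableEq ι] {K : Type*} [Field K]
    {M : Matrix ι ι K} {μ : K} (hμ : μ ∈ spectrum K M) :
    ∃ v ≠ 0, M *ᵥ v = μ • v := by
  rw [← spectrum_toLin'] at hμ
  obtain ⟨v, hv⟩ := (Module.End.hasEigenvalue_iff_mem_spectrum.mpr hμ).exists_hasEigenvector
  exact ⟨v, hv.2, by simpa using hv.apply_eq_smul⟩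

theorem star_dotProduct_mul_add_conjTranspose_mul_mulVec {R : Type*} [CommRing R] [StarRing R]
    {M : Matrix ι ι R} {v : ι → R} {μ : R} (hv : M *ᵥ v = μ • v) (P : Matrix ι ι R) :
    star v ⬝ᵥ (P * M + Mᴴ * P) *ᵥ v = (μ + star μ) * (star v ⬝ᵥ P *ᵥ v) := by
  rw [add_mulVec, ← mulVec_mulVec, ← mulVec_mulVec, hv, dotProduct_add, dotProduct_mulVec _ Mᴴ,
    ← star_mulVec, hv, mulVec_smul, dotProduct_smul, star_smul, smul_dotProduct]
  simp only [smul_eq_mul]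
  ring

theorem re_star_dotProduct_map_ofReal_mulVec (S : Matrix ι ι ℝ) (z : ι → ℂ) :
    (star z ⬝ᵥ S.map ofReal *ᵥ z).re =
      (fun i => (z i).re) ⬝ᵥ S *ᵥ (fun i => (z i).re) +
        (fun i => (z i).im) ⬝ᵥ S *ᵥ (fun i => (z i).im) := by
  simp only [dotProduct, mulVec, Finset.mul_sum, re_sum, ← Finset.sum_add_distrib]
  refine Finset.sum_congr rfl fun i _ => Finset.sum_congr rfl fun j _ => ?_
  simp

theorem re_map_ofReal_mulVec {κ : Type*} (A : Matrix κ ι ℝ) (z : ι → ℂ) :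
    (fun i => ((A.map ofReal *ᵥ z) i).re) = A *ᵥ fun i => (z i).re := by
  ext i
  simp [mulVec, dotProduct, re_sum]

theorem im_map_ofReal_mulVec {κ : Type*} (A : Matrix κ ι ℝ) (z : ι → ℂ) :
    (fun i => ((A.map ofReal *ᵥ z) i).im) = A *ᵥ fun i => (z i).im := by
  ext i
  simp [mulVec, dotProduct, im_sum]

theorem PosDef.re_star_dotProduct_map_ofReal_mulVec_pos {P : Matrix ι ι ℝ} (hP : P.PosDef)
    {z : ι → ℂ} (hz : z ≠ 0) : 0 < (star z ⬝ᵥ P.map ofReal *ᵥ z).re := by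
  rw [re_star_dotProduct_map_ofReal_mulVec]
  have hre := hP.posSemidef.dotProduct_mulVec_nonneg (fun i => (z i).re)
  have him := hP.posSemidef.dotProduct_mulVec_nonneg (fun i => (z i).im)
  simp only [star_trivial] at hre him
  by_cases hx : (fun i => (z i).re) = 0
  · have hy : (fun i => (z i).im) ≠ 0 := fun hy =>
      hz (funext fun i => Complex.ext (congrFun hx i) (congrFun hy i))
    simpa [hx] using hP.dotProduct_mulVec_pos hy
  · have := hP.dotProduct_mulVec_pos hx
    simp only [star_trivial] at this
    linarith

theorem mul_add_transpose_mul_sub_smul_inv_mul {R : Type*} [DecidableEq ι] [CommRing R]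
    {P : Matrix ι ι R} (hPs : P.IsSymm) (hPu : IsUnit P.det) (A : Matrix ι ι R)
    {κ : Type*} [Fintype κ] (C : Matrix κ ι R) (α : R) :
    P * (A - α • (P⁻¹ * Cᵀ * C)) + (A - α • (P⁻¹ * Cᵀ * C))ᵀ * P =
      P * A + Aᵀ * P - (2 * α) • (Cᵀ * C) := by
  have hleft : P * (α • (P⁻¹ * Cᵀ * C)) = α • (Cᵀ * C) := by
    rw [Matrix.mul_smul, ← Matrix.mul_assoc, ← Matrix.mul_assoc, mul_nonsing_inv P hPu,
      Matrix.one_mul]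
  have hright : (α • (P⁻¹ * Cᵀ * C))ᵀ * P = α • (Cᵀ * C) := by
    rw [transpose_smul, Matrix.smul_mul, transpose_mul, transpose_mul, transpose_transpose,
      transpose_nonsing_inv, hPs.eq, Matrix.mul_assoc, Matrix.mul_assoc, nonsing_inv_mul P hPu,
      Matrix.mul_one]
  rw [mul_sub, transpose_sub, sub_mul, hleft, hright, two_mul, add_smul]
  abel

theorem map_ofReal_mul_add_transpose_mul (P M : Matrix ι ι ℝ) :
    (P * M + Mᵀ * P).map ofReal =
      P.map ofReal * M.map ofReal + (M.map ofReal)ᴴ * P.map ofReal := by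
  rw [← conjTranspose_map _ (fun _ => (conj_ofReal _).symm),
    conjTranspose_eq_transpose_of_trivial, Matrix.map_add _ ofReal_add, transpose_map]
  exact congrArg₂ (· + ·) (Matrix.map_mul (f := ofRealHom)) (Matrix.map_mul (f := ofRealHom))

theorem PosDef.map_ofReal_mulVec_eq_zero_of_re_nonneg [DecidableEq ι] {κ : Type*} [Fintype κ]
    {P A : Matrix ι ι ℝ} {C : Matrix κ ι ℝ} (hP : P.PosDef)
    (hdiss : ∀ x, x ⬝ᵥ (P * A + Aᵀ * P) *ᵥ x ≤ 0) {α : ℝ} (hα : 0 < α) {z : ι → ℂ} {μ : ℂ}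
    (hz : (A - α • (P⁻¹ * Cᵀ * C)).map ofReal *ᵥ z = μ • z) (hz0 : z ≠ 0) (hμ : 0 ≤ μ.re) :
    C.map ofReal *ᵥ z = 0 := by
  have hquad :=
    congrArg re (star_dotProduct_mul_add_conjTranspose_mul_mulVec hz (P.map ofReal))
  rw [← map_ofReal_mul_add_transpose_mul, mul_add_transpose_mul_sub_smul_inv_mul
    (isHermitian_iff_isSymm.1 hP.isHermitian) hP.det_pos.ne'.isUnit,
    re_star_dotProduct_map_ofReal_mulVec, star_def, add_conj, re_ofReal_mul] at hquad
  have hsplit : ∀ w, w ⬝ᵥ (P * A + Aᵀ * P - (2 * α) • (Cᵀ * C)) *ᵥ w =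
      w ⬝ᵥ (P * A + Aᵀ * P) *ᵥ w - 2 * α * ((C *ᵥ w) ⬝ᵥ (C *ᵥ w)) := fun w => by
    rw [sub_mulVec, dotProduct_sub, smul_mulVec, dotProduct_smul, ← mulVec_mulVec,
      dotProduct_mulVec w Cᵀ, vecMul_transpose, smul_eq_mul]
  rw [hsplit, hsplit] at hquad
  set x := fun i => (z i).re
  set y := fun i => (z i).im
  have hq := hP.re_star_dotProduct_map_ofReal_mulVec_pos hz0
  have hx := hdiss x
  have hy := hdiss y
  have hCx := dotProduct_star_self_nonneg (C *ᵥ x)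
  have hCy := dotProduct_star_self_nonneg (C *ᵥ y)
  rw [star_trivial] at hCx hCy
  have hsum : (C *ᵥ x) ⬝ᵥ (C *ᵥ x) + (C *ᵥ y) ⬝ᵥ (C *ᵥ y) ≤ 0 := by
    nlinarith [mul_nonneg hμ hq.le]
  have hCx0 : C *ᵥ x = 0 := dotProduct_self_eq_zero.1 (by linarith)
  have hCy0 : C *ᵥ y = 0 := dotProduct_self_eq_zero.1 (by linarith)
  refine funext fun i => Complex.ext ?_ ?_
  · exact (congrFun (re_map_ofReal_mulVec C z) i).trans (congrFun hCx0 i)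
  · exact (congrFun (im_map_ofReal_mulVec C z) i).trans (congrFun hCy0 i)

theorem map_ofReal_sub_mul_mulVec {κ : Type*} [Fintype κ] (A : Matrix ι ι ℝ)
    (B : Matrix ι κ ℝ) {C : Matrix κ ι ℝ} {z : ι → ℂ} (hCz : C.map ofReal *ᵥ z = 0) :
    (A - B * C).map ofReal *ᵥ z = A.map ofReal *ᵥ z := by
  have hBC : (B * C).map ofReal = B.map ofReal * C.map ofReal :=
    Matrix.map_mul (f := ofRealHom)
  rw [Matrix.map_sub _ ofReal_sub, sub_mulVec, hBC, ← mulVec_mulVec, hCz, mulVec_zero, sub_zero]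

def Detectable {κ : Type*} (C : Matrix κ ι ℝ) (A : Matrix ι ι ℝ) : Prop :=
  ∀ ω : ℝ → ι → ℝ, (∀ t, HasDerivAt ω (A *ᵥ ω t) t) → (∀ t, 0 ≤ t → C *ᵥ ω t = 0) →
    Tendsto ω atTop (𝓝 0)

theorem hasDerivAt_re_cexp_mul_smul {A : Matrix ι ι ℝ} {z : ι → ℂ} {μ : ℂ}
    (hz : A.map ofReal *ᵥ z = μ • z) (t : ℝ) :
    HasDerivAt (fun s : ℝ => fun i => ((cexp (μ * s) • z) i).re)
      (A *ᵥ fun i => ((cexp (μ * t) • z) i).re) t := by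
  rw [← re_map_ofReal_mulVec, mulVec_smul, hz]
  refine hasDerivAt_pi.2 fun i => ?_
  have hexp : HasDerivAt (fun s : ℝ => cexp (μ * s)) (cexp (μ * t) * μ) t := by
    simpa using (((hasDerivAt_id t).ofReal_comp).const_mul μ).cexp
  simpa [Function.comp_def, mul_assoc] using
    reCLM.hasFDerivAt.comp_hasDerivAt t (hexp.mul_const (z i))

theorem Detectable.tendsto_cexp_mul_smul {κ : Type*} [Fintype κ] {C : Matrix κ ι ℝ}
    {A : Matrix ι ι ℝ} (hdet : Detectable C A) {z : ι → ℂ} {μ : ℂ}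
    (hAz : A.map ofReal *ᵥ z = μ • z) (hCz : C.map ofReal *ᵥ z = 0) :
    Tendsto (fun t : ℝ => cexp (μ * t) • z) atTop (𝓝 0) := by
  have hre : ∀ w : ι → ℂ, A.map ofReal *ᵥ w = μ • w → C.map ofReal *ᵥ w = 0 →
      Tendsto (fun t : ℝ => fun i => ((cexp (μ * t) • w) i).re) atTop (𝓝 0) :=
    fun w hAw hCw => hdet _ (hasDerivAt_re_cexp_mul_smul hAw) fun t _ => by
      rw [← re_map_ofReal_mulVec, mulVec_smul, hCw, smul_zero]
      rfl
  -- the imaginary part of `e^{μt} z` is the real part of `e^{μt} (-i z)`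
  have him := hre (-I • z) (by rw [mulVec_smul, hAz, smul_comm])
    (by rw [mulVec_smul, hCz, smul_zero])
  refine tendsto_pi_nhds.2 fun i => ?_
  have hre_i : Tendsto (fun t : ℝ => (((cexp (μ * t) • z) i).re : ℂ)) atTop (𝓝 0) := by
    simpa only [Function.comp_def, ofReal_zero] using
      (continuous_ofReal.tendsto 0).comp (tendsto_pi_nhds.1 (hre z hAz hCz) i)
  have him_i : Tendsto (fun t : ℝ => (((cexp (μ * t) • z) i).im : ℂ)) atTop (𝓝 0) := by
    have hrot : ∀ t : ℝ, ((cexp (μ * t) • (-I • z)) i).re = ((cexp (μ * t) • z) i).im := by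
      intro t
      simp only [Pi.smul_apply, smul_eq_mul, neg_mul, mul_neg, mul_left_comm _ I, neg_re,
        I_mul_re, neg_neg]
    simpa only [Function.comp_def, ofReal_zero, hrot] using
      (continuous_ofReal.tendsto 0).comp (tendsto_pi_nhds.1 him i)
  simpa only [re_add_im, zero_mul, add_zero, Pi.zero_apply] using hre_i.add (him_i.mul_const I)

end Matrix

/-- dissipativity plus detectability of (C,A) implies that
A - αP⁻¹C'C is Hurwitz for every α > 0. -/
theorem stmt1 {n p : ℕ}
    (P A : Matrix (Fin n) (Fin n) ℝ) (C : Matrix (Fin p) (Fin n) ℝ)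
    (hP : P.PosDef)
    (hdiss : ∀ x : Fin n → ℝ, x ⬝ᵥ (P * A + Aᵀ * P) *ᵥ x ≤ 0)
    (hdet : ∀ ω : ℝ → Fin n → ℝ,
      (∀ t, HasDerivAt ω (A *ᵥ ω t) t) →
      (∀ t, 0 ≤ t → C *ᵥ ω t = 0) →
      Tendsto ω atTop (𝓝 0))
    (α : ℝ) (hα : 0 < α) :
    ∀ μ ∈ spectrum ℂ ((A - α • (P⁻¹ * Cᵀ * C)).map (Complex.ofReal)),
      μ.re < 0 := by
  intro μ hμ
  by_contra! hre
  obtain ⟨z, hz0, hz⟩ := exists_mulVec_eq_smul_of_mem_spectrum hμ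
  have hCz := hP.map_ofReal_mulVec_eq_zero_of_re_nonneg hdiss hα hz hz0 hre
  have hAz : A.map Complex.ofReal *ᵥ z = μ • z := by
    rwa [← Matrix.smul_mul, map_ofReal_sub_mul_mulVec _ _ hCz] at hz
  exact hz0 (eq_zero_of_tendsto_cexp_mul_smul hre
    ((show Detectable C A from hdet).tendsto_cexp_mul_smul hAz hCz))
end

section
/- For the heat exchanger matrix A(v) = ((-kI₃ + γ₁ v J, kI₃), (kI₃, -kI₃ + γ₂ J')) with J the 3×3 lower bidiagonal matrix with -1 on the diagonal and 1 on the subdiagonal, and constants k, γ₁, γ₂ > 0, the symmetric part A(v) + A(v)' is negative definite whenever 0 < γ₁ v < 2k and γ₂ < 2k (strict diagonal dominance via Gershgorin). -/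
open Matrix

set_option maxHeartbeats 1000000 in
/-- for the heat exchanger block matrix
A(v) = ((-kI₃ + γ₁vJ, kI₃), (kI₃, -kI₃ + γ₂J')), the symmetric part
A(v) + A(v)' is negative definite whenever 0 < γ₁v < 2k and γ₂ < 2k. -/
theorem stmt13 (k γ₁ γ₂ v : ℝ)
    (hk : 0 < k) (hγ₁ : 0 < γ₁) (hγ₂ : 0 < γ₂) (hv : 0 < v)
    (h₁ : 0 < γ₁ * v) (h₂ : γ₁ * v < 2 * k) (h₃ : γ₂ < 2 * k) :
    let J : Matrix (Fin 3) (Fin 3) ℝ := !![-1, 0, 0; 1, -1, 0; 0, 1, -1]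
    let A : Matrix (Fin 3 ⊕ Fin 3) (Fin 3 ⊕ Fin 3) ℝ :=
      Matrix.fromBlocks (-(k • (1 : Matrix (Fin 3) (Fin 3) ℝ)) + (γ₁ * v) • J)
        (k • (1 : Matrix (Fin 3) (Fin 3) ℝ))
        (k • (1 : Matrix (Fin 3) (Fin 3) ℝ))
        (-(k • (1 : Matrix (Fin 3) (Fin 3) ℝ)) + γ₂ • Jᵀ)
    ∀ x : Fin 3 ⊕ Fin 3 → ℝ, x ≠ 0 → x ⬝ᵥ (A + Aᵀ) *ᵥ x < 0 := by
  intro J A x hx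
  set a := x (Sum.inl 0) with ha_def
  set b := x (Sum.inl 1) with hb_def
  set c := x (Sum.inl 2) with hc_def
  set d := x (Sum.inr 0) with hd_def
  set e := x (Sum.inr 1) with he_def
  set f := x (Sum.inr 2) with hf_def
  have key : x ⬝ᵥ (A + Aᵀ) *ᵥ x =
      -(2*k) * ((a-d)^2 + (b-e)^2 + (c-f)^2)
      - (γ₁*v) * (a^2 + (a-b)^2 + (b-c)^2 + c^2)
      - γ₂ * (d^2 + (d-e)^2 + (e-f)^2 + f^2) := by
    simp [A, J, dotProduct, mulVec, Matrix.add_apply, Matrix.transpose_apply,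
      Fintype.sum_sum_type, Fin.sum_univ_succ, Matrix.fromBlocks,
      Matrix.one_apply, Matrix.vecHead, Matrix.vecTail, Function.comp]
    ring
  rw [key]
  clear key
  clear A J
  by_contra hq
  push_neg at hq
  have hA : 0 ≤ (a-d)^2 + (b-e)^2 + (c-f)^2 := by positivity
  have hB : 0 ≤ a^2 + (a-b)^2 + (b-c)^2 + c^2 := by positivity
  have hC : 0 ≤ d^2 + (d-e)^2 + (e-f)^2 + f^2 := by positivity
  have hB0 : a^2 + (a-b)^2 + (b-c)^2 + c^2 = 0 := by
    have h1 : (γ₁*v) * (a^2 + (a-b)^2 + (b-c)^2 + c^2) ≤ 0 := by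
      nlinarith [mul_nonneg hk.le hA, mul_nonneg hγ₂.le hC]
    have h2 : 0 ≤ (γ₁*v) * (a^2 + (a-b)^2 + (b-c)^2 + c^2) := mul_nonneg h₁.le hB
    exact (mul_eq_zero.mp (le_antisymm h1 h2)).resolve_left h₁.ne'
  have hC0 : d^2 + (d-e)^2 + (e-f)^2 + f^2 = 0 := by
    have h1 : γ₂ * (d^2 + (d-e)^2 + (e-f)^2 + f^2) ≤ 0 := by
      nlinarith [mul_nonneg hk.le hA, mul_nonneg h₁.le hB]
    have h2 : 0 ≤ γ₂ * (d^2 + (d-e)^2 + (e-f)^2 + f^2) := mul_nonneg hγ₂.le hC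
    exact (mul_eq_zero.mp (le_antisymm h1 h2)).resolve_left hγ₂.ne'
  have ha : a = 0 := by nlinarith [sq_nonneg a, sq_nonneg (a-b), sq_nonneg (b-c), sq_nonneg c]
  have hc : c = 0 := by nlinarith [sq_nonneg a, sq_nonneg (a-b), sq_nonneg (b-c), sq_nonneg c]
  have hb : b = 0 := by nlinarith [sq_nonneg a, sq_nonneg (b-c), sq_nonneg c]
  have hd : d = 0 := by nlinarith [sq_nonneg d, sq_nonneg (d-e), sq_nonneg (e-f), sq_nonneg f]
  have hf : f = 0 := by nlinarith [sq_nonneg d, sq_nonneg (d-e), sq_nonneg (e-f), sq_nonneg f]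
  have he : e = 0 := by nlinarith [sq_nonneg d, sq_nonneg (e-f), sq_nonneg f]
  apply hx
  funext i
  rcases i with i | i <;> fin_cases i
  · exact ha
  · exact hb
  · exact hc
  · exact hd
  · exact he
  · exact hf
end

section
/- Let f : ℝⁿ → ℝⁿ be a locally Lipschitz vector field, W : D → ℝ≥0 a C¹ proper function on an open set D containing 0 with W(0)=0 and ∇W(x)·f(x) ≤ -W(x) on D. Let k : ℝ → ℝⁿ be a perturbation with |k(t)| ≤ max{W(x̂(t)),1} / (2(1 + |∇W(x̂(t))|)) along a solution x̂ of x̂̇ = f(x̂) + k(t). Then W(x̂(t)) ≤ max{W(x̂(0)), 1} for all t ≥ 0 in the maximal interval of existence. -/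
open Set

/-- ISS-type Lyapunov bound for the perturbed system
xḣ = f(xh) + k(t): if ∇W·f ≤ -W on D and the perturbation satisfies
|k(t)| ≤ max{W(xh(t)),1}/(2(1+|∇W(xh(t))|)), then
W(xh(t)) ≤ max{W(xh(0)),1} on the interval of existence. -/
theorem stmt14 {n : ℕ}
    (D : Set (EuclideanSpace ℝ (Fin n))) (hD : IsOpen D) (h0D : (0 : EuclideanSpace ℝ (Fin n)) ∈ D)
    (f : EuclideanSpace ℝ (Fin n) → EuclideanSpace ℝ (Fin n))
    (hf : LocallyLipschitz f)
    (W : EuclideanSpace ℝ (Fin n) → ℝ)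
    (W' : EuclideanSpace ℝ (Fin n) → (EuclideanSpace ℝ (Fin n) →L[ℝ] ℝ))
    (hWpos : ∀ x ∈ D, 0 ≤ W x) (hW0 : W 0 = 0)
    (hWC1 : ∀ x ∈ D, HasFDerivAt W (W' x) x)
    (hW'cont : ContinuousOn W' D)
    (hproper : ∀ s : Set ℝ, IsCompact s → IsCompact {x ∈ D | W x ∈ s})
    (hLyap : ∀ x ∈ D, W' x (f x) ≤ -W x)
    (T : ℝ) (hT : 0 < T)
    (k : ℝ → EuclideanSpace ℝ (Fin n))
    (xh : ℝ → EuclideanSpace ℝ (Fin n))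
    (hxhD : ∀ t ∈ Ico (0 : ℝ) T, xh t ∈ D)
    (hsol : ∀ t ∈ Ico (0 : ℝ) T, HasDerivAt xh (f (xh t) + k t) t)
    (hk : ∀ t ∈ Ico (0 : ℝ) T,
      ‖k t‖ ≤ max (W (xh t)) 1 / (2 * (1 + ‖W' (xh t)‖))) :
    ∀ t ∈ Ico (0 : ℝ) T, W (xh t) ≤ max (W (xh 0)) 1 := by
  intro t ht
  set M : ℝ := max (W (xh 0)) 1 with hM
  have hM1 : (1:ℝ) ≤ M := le_max_right _ _
  -- derivative of v = W ∘ xh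
  have hv : ∀ s ∈ Ico (0:ℝ) T,
      HasDerivAt (fun s => W (xh s)) (W' (xh s) (f (xh s) + k s)) s := by
    intro s hs
    exact (hWC1 _ (hxhD s hs)).comp_hasDerivAt s (hsol s hs)
  have hsub : Icc (0:ℝ) t ⊆ Ico 0 T := Icc_subset_Ico_right ht.2
  have key : ∀ s ∈ Ico (0:ℝ) T, W (xh s) = M → W' (xh s) (f (xh s) + k s) < 0 := by
    intro s hs hvs
    have hxD := hxhD s hs
    have h1 : W' (xh s) (f (xh s)) ≤ -M := hvs ▸ hLyap _ hxD
    have hmax : max (W (xh s)) 1 = M := by rw [hvs]; exact max_eq_left hM1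
    have hden : (0:ℝ) < 2 * (1 + ‖W' (xh s)‖) := by positivity
    have h2 : |W' (xh s) (k s)| ≤ M / 2 := by
      calc |W' (xh s) (k s)| ≤ ‖W' (xh s)‖ * ‖k s‖ := (W' (xh s)).le_opNorm _
        _ ≤ ‖W' (xh s)‖ * (M / (2 * (1 + ‖W' (xh s)‖))) := by
            apply mul_le_mul_of_nonneg_left _ (norm_nonneg _)
            have := hk s hs; rwa [hmax] at this
        _ ≤ M / 2 := by
            have hM0 : (0:ℝ) ≤ M := by linarith
            have hn : (0:ℝ) ≤ ‖W' (xh s)‖ := norm_nonneg _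
            rw [mul_div_assoc', div_le_div_iff₀ hden (by norm_num : (0:ℝ) < 2)]
            nlinarith
    rw [map_add]
    have := abs_le.1 h2
    linarith
  have main : ∀ s ∈ Icc (0:ℝ) t, W (xh s) ≤ M := by
    apply image_le_of_deriv_right_lt_deriv_boundary
      (f' := fun s => W' (xh s) (f (xh s) + k s)) (B := fun _ => M) (B' := fun _ => 0)
    · exact fun s hs => (hv s (hsub hs)).continuousAt.continuousWithinAt
    · exact fun s hs => (hv s (hsub (Ico_subset_Icc_self hs))).hasDerivWithinAt
    · exact le_max_left _ _
    · exact fun _ => hasDerivAt_const _ _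
    · exact fun s hs h => key s (hsub (Ico_subset_Icc_self hs)) h
  exact main t ⟨ht.1, le_refl t⟩
end

section
/- If 0 < u* < 1, E ≠ 0 and V_d ≠ 0, then the pair (C, A(0)) for the Ćuk converter is observable: the 4×4 Kalman observability matrix [C; CA(0); CA(0)²; CA(0)³] is invertible, where A(0) = (J(u*) - R₀)P with the matrices as in the Ćuk model. -/
/-!
In the Ćuk model each state variable is coupled only to its neighbours in the chain
`i_L₁ – v_C₂ – i_L₃ – v_C₄`, and the output `v_C₂` sits in that chain, so the rows `C Aᵏ` fill
the state space in a staircase pattern and the Kalman determinant factors as a single monomial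
in the coupling coefficients. For `A(0)` that monomial is `u*² (1 - u*) / (L₁ L₃³ C₄²)`, which
is nonzero exactly when `u* ∉ {0, 1}`.
-/

open Matrix

namespace Matrix

variable {R : Type*} [CommRing R]

def observabilityMatrix {n : ℕ} (c : Matrix (Fin 1) (Fin n) R) (A : Matrix (Fin n) (Fin n) R) :
    Matrix (Fin n) (Fin n) R :=
  of fun i j => (c * A ^ (i : ℕ)) 0 j

variable (a b c d e f g : R)

theorem observabilityMatrix_fin_four_chain :
    observabilityMatrix !![0, 1, 0, 0] !![0, a, 0, 0; b, 0, c, 0; 0, d, 0, e; 0, 0, f, g] =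
      !![0, 1, 0, 0;
         b, 0, c, 0;
         0, a * b + c * d, 0, c * e;
         (a * b + c * d) * b, 0, (a * b + c * d) * c + c * e * f, c * e * g] := by
  ext i j
  fin_cases i <;> fin_cases j <;>
    simp [observabilityMatrix, pow_succ, Matrix.mul_apply, Fin.sum_univ_four] <;> ring

theorem det_observabilityMatrix_fin_four_chain :
    (observabilityMatrix !![0, 1, 0, 0]
        !![0, a, 0, 0; b, 0, c, 0; 0, d, 0, e; 0, 0, f, g]).det = b * c ^ 2 * e ^ 2 * f := by
  rw [observabilityMatrix_fin_four_chain, det_succ_row_zero]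
  simp [Fin.sum_univ_succ, det_succ_row_zero, Fin.succAbove]
  ring

end Matrix

theorem cuk_stateMatrix_eq {K : Type*} [Field K] (u L₁ C₂ L₃ C₄ R : K) :
    (!![0, -(1 - u), 0, 0; 1 - u, 0, u, 0; 0, -u, 0, -1; 0, 0, 1, 0] -
        diagonal ![0, 0, 0, 1 / R]) * diagonal ![1 / L₁, 1 / C₂, 1 / L₃, 1 / C₄] =
      !![0, -(1 - u) / C₂, 0, 0;
         (1 - u) / L₁, 0, u / L₃, 0;
         0, -u / C₂, 0, -1 / C₄;
         0, 0, 1 / L₃, -1 / (R * C₄)] := by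
  ext i j
  fin_cases i <;> fin_cases j <;> simp [Matrix.mul_apply, Fin.sum_univ_four] <;> ring

theorem stmt19_general (L₁ C₂ L₃ C₄ R : ℝ)
    (hL₁ : 0 < L₁) (hL₃ : 0 < L₃) (hC₄ : 0 < C₄)
    (ustar : ℝ)
    (h0 : 0 < ustar) (h1 : ustar < 1) :
    let P : Matrix (Fin 4) (Fin 4) ℝ :=
      Matrix.diagonal ![1 / L₁, 1 / C₂, 1 / L₃, 1 / C₄]
    let J : Matrix (Fin 4) (Fin 4) ℝ :=
      !![0, -(1 - ustar), 0, 0;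
         1 - ustar, 0, ustar, 0;
         0, -ustar, 0, -1;
         0, 0, 1, 0]
    let R₀ : Matrix (Fin 4) (Fin 4) ℝ := Matrix.diagonal ![0, 0, 0, 1 / R]
    let A0 : Matrix (Fin 4) (Fin 4) ℝ := (J - R₀) * P
    let Crow : Matrix (Fin 1) (Fin 4) ℝ := !![0, 1, 0, 0]
    let O : Matrix (Fin 4) (Fin 4) ℝ :=
      Matrix.of fun i j => (Crow * A0 ^ (i : ℕ)) 0 j
    IsUnit O := by
  intro P J R₀ A0 Crow O
  show IsUnit (observabilityMatrix Crow ((J - R₀) * P))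
  rw [cuk_stateMatrix_eq, isUnit_iff_isUnit_det, det_observabilityMatrix_fin_four_chain,
    isUnit_iff_ne_zero]
  have : 0 < 1 - ustar := sub_pos.mpr h1
  positivity

/-- for the Ćuk converter, if 0 < u* < 1 (with
u* = V_d/(V_d+E), E ≠ 0, V_d ≠ 0), then the pair (C, A(0)) is observable: the
4×4 Kalman observability matrix [C; CA(0); CA(0)²; CA(0)³] is invertible. -/
theorem stmt19 (L₁ C₂ L₃ C₄ R E Vd : ℝ)
    (hL₁ : 0 < L₁) (hC₂ : 0 < C₂) (hL₃ : 0 < L₃) (hC₄ : 0 < C₄) (hR : 0 < R)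
    (hE : E ≠ 0) (hVd : Vd ≠ 0)
    (ustar : ℝ) (hustar : ustar = Vd / (Vd + E))
    (h0 : 0 < ustar) (h1 : ustar < 1) :
    let P : Matrix (Fin 4) (Fin 4) ℝ :=
      Matrix.diagonal ![1 / L₁, 1 / C₂, 1 / L₃, 1 / C₄]
    let J : Matrix (Fin 4) (Fin 4) ℝ :=
      !![0, -(1 - ustar), 0, 0;
         1 - ustar, 0, ustar, 0;
         0, -ustar, 0, -1;
         0, 0, 1, 0]
    let R₀ : Matrix (Fin 4) (Fin 4) ℝ := Matrix.diagonal ![0, 0, 0, 1 / R]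
    let A0 : Matrix (Fin 4) (Fin 4) ℝ := (J - R₀) * P
    let Crow : Matrix (Fin 1) (Fin 4) ℝ := !![0, 1, 0, 0]
    let O : Matrix (Fin 4) (Fin 4) ℝ :=
      Matrix.of fun i j => (Crow * A0 ^ (i : ℕ)) 0 j
    IsUnit O :=
  stmt19_general L₁ C₂ L₃ C₄ R hL₁ hL₃ hC₄ ustar h0 h1
end
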